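/- arXiv:2503.20736 — 2 statements merged into one kernel-verified Lean document; each statement's English description precedes it below -/
import Mathlib

section
/- For H ∈ (0,1) with H ≠ 1/2, as k → ∞ the fractional Gaussian noise autocovariance satisfies ρ(k) / (H(2H-1) k^{2H-2}) → 1, i.e., ρ(k) ~ H(2H-1)k^{2H-2}. -/
/-!
Writing `u = 1/k`, `ρ(k) = k^{2H} (f(1 + u) + f(1 - u) - 2 f(1)) / 2` with `f(y) = y^{2H}`, while
`H(2H-1) k^{2H-2} = k^{2H} u² f''(1) / 2`. So the ratio is the second symmetric difference quotient
of `f` at `1`, divided by `f''(1) = 2H(2H-1) ≠ 0`, and that quotient tends to `f''(1)`: by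
L'Hôpital it becomes `(f'(1 + u) - f'(1 - u)) / 2u`, a symmetric slope of `f'`.
-/

open Filter Topology

/-- fGn autocovariance for positive lags. -/
noncomputable def fgnRhoNat (H : ℝ) (k : ℕ) : ℝ :=
  (1 / 2) * (((k : ℝ) + 1) ^ (2 * H) - 2 * (k : ℝ) ^ (2 * H) + ((k : ℝ) - 1) ^ (2 * H))

theorem HasDerivAt.tendsto_symmetric_slope_zero {f' : ℝ → ℝ} {x f'' : ℝ}
    (hf' : HasDerivAt f' f'' x) :
    Tendsto (fun t => (f' (x + t) - f' (x - t)) / (2 * t)) (𝓝[≠] 0) (𝓝 f'') := by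
  have hplus : HasDerivAt (fun t => f' (x + t)) f'' 0 :=
    HasDerivAt.comp_const_add x 0 (by simpa using hf')
  have hminus : HasDerivAt (fun t => f' (x - t)) (-f'') 0 :=
    HasDerivAt.comp_const_sub x 0 (by simpa using hf')
  have := (hplus.sub hminus).tendsto_slope_zero.div_const 2
  rw [sub_neg_eq_add, add_self_div_two] at this
  refine this.congr fun t => ?_
  simp only [Pi.sub_apply, zero_add, add_zero, sub_zero, sub_self, smul_eq_mul]
  field_simp

theorem tendsto_second_symmetric_difference {f f' : ℝ → ℝ} {x f'' : ℝ}
    (hf : ∀ᶠ y in 𝓝 x, HasDerivAt f (f' y) y) (hf' : HasDerivAt f' f'' x) :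
    Tendsto (fun t => (f (x + t) + f (x - t) - 2 * f x) / t ^ 2) (𝓝[≠] 0) (𝓝 f'') := by
  have hplus : Tendsto (fun t => x + t) (𝓝 0) (𝓝 x) :=
    (continuous_const_add x).tendsto' 0 x (add_zero x)
  have hminus : Tendsto (fun t => x - t) (𝓝 0) (𝓝 x) :=
    (continuous_const.sub continuous_id).tendsto' 0 x (sub_zero x)
  have hderiv : ∀ᶠ t in 𝓝[≠] 0, HasDerivAt (fun t => f (x + t) + f (x - t) - 2 * f x)
      (f' (x + t) - f' (x - t)) t := by
    refine eventually_nhdsWithin_of_eventually_nhds ?_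
    filter_upwards [hplus.eventually hf, hminus.eventually hf] with t hadd hsub
    simpa [sub_eq_add_neg] using
      ((hadd.comp_const_add x t).add (hsub.comp_const_sub x t)).sub_const (2 * f x)
  have hcont : ContinuousAt f x := hf.self_of_nhds.continuousAt
  have hlim : Tendsto (fun t => f (x + t) + f (x - t) - 2 * f x) (𝓝[≠] 0) (𝓝 0) := by
    have := ((hcont.tendsto.comp hplus).add (hcont.tendsto.comp hminus)).sub_const (2 * f x)
    rw [← two_mul, sub_self] at this
    exact this.mono_left nhdsWithin_le_nhds
  refine HasDerivAt.lhopital_zero_nhdsNE hderiv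
    (Eventually.of_forall fun t => by simpa using hasDerivAt_pow 2 t) ?_ hlim ?_
    hf'.tendsto_symmetric_slope_zero
  · filter_upwards [self_mem_nhdsWithin] with t ht
    exact mul_ne_zero two_ne_zero ht
  · exact tendsto_nhdsWithin_of_tendsto_nhds (by simpa using (continuous_pow 2).tendsto (0 : ℝ))

theorem tendsto_rpow_second_symmetric_difference_one (p : ℝ) :
    Tendsto (fun t : ℝ => ((1 + t) ^ p + (1 - t) ^ p - 2) / t ^ 2) (𝓝[≠] 0)
      (𝓝 (p * (p - 1))) := by
  have hf : ∀ᶠ y in 𝓝 (1 : ℝ), HasDerivAt (fun y => y ^ p) (p * y ^ (p - 1)) y := by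
    filter_upwards [lt_mem_nhds one_pos] with y hy
    exact Real.hasDerivAt_rpow_const (Or.inl hy.ne')
  have hf' := (Real.hasDerivAt_rpow_const (p := p - 1) (Or.inl one_ne_zero)).const_mul p
  simpa using tendsto_second_symmetric_difference hf hf'

theorem fgnRhoNat_div_eq {H : ℝ} {k : ℕ} (hk : 0 < k) :
    fgnRhoNat H k / (H * (2 * H - 1) * (k : ℝ) ^ (2 * H - 2)) =
      ((1 + (k : ℝ)⁻¹) ^ (2 * H) + (1 - (k : ℝ)⁻¹) ^ (2 * H) - 2) / ((k : ℝ)⁻¹) ^ 2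
        / (2 * H * (2 * H - 1)) := by
  have hk0 : (0 : ℝ) < k := by exact_mod_cast hk
  have hk1 : (k : ℝ)⁻¹ ≤ 1 := inv_le_one_of_one_le₀ (by exact_mod_cast hk)
  have hscale (s : ℝ) (hs : 0 ≤ 1 + s * (k : ℝ)⁻¹) :
      ((k : ℝ) + s) ^ (2 * H) = (k : ℝ) ^ (2 * H) * (1 + s * (k : ℝ)⁻¹) ^ (2 * H) := by
    rw [← Real.mul_rpow hk0.le hs]
    field_simp
  have hpow : (k : ℝ) ^ (2 * H - 2) = (k : ℝ) ^ (2 * H) * ((k : ℝ)⁻¹) ^ 2 := by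
    rw [Real.rpow_sub hk0, Real.rpow_two, inv_pow, div_eq_mul_inv]
  rw [fgnRhoNat, hscale 1 (by positivity), sub_eq_add_neg (k : ℝ), hscale (-1) (by linarith),
    one_mul, neg_one_mul, ← sub_eq_add_neg, hpow]
  have : (k : ℝ) ^ (2 * H) ≠ 0 := by positivity
  field_simp
  ring

theorem fgnRho_asymptotic (H : ℝ) (hH : H ∈ Set.Ioo (0 : ℝ) 1) (hH2 : H ≠ 1 / 2) :
    Tendsto (fun k : ℕ => fgnRhoNat H k / (H * (2 * H - 1) * (k : ℝ) ^ (2 * H - 2)))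
      atTop (nhds 1) := by
  have hne : 2 * H * (2 * H - 1) ≠ 0 := by
    have : 2 * H - 1 ≠ 0 := fun h => hH2 (by linarith)
    exact mul_ne_zero (mul_ne_zero two_ne_zero hH.1.ne') this
  have hinv : Tendsto (fun k : ℕ => (k : ℝ)⁻¹) atTop (𝓝[≠] 0) :=
    (tendsto_inv_atTop_nhdsGT_zero.mono_right (nhdsGT_le_nhdsNE 0)).comp
      tendsto_natCast_atTop_atTop
  have hlim := ((tendsto_rpow_second_symmetric_difference_one (2 * H)).comp hinv).div_const
    (2 * H * (2 * H - 1))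
  rw [div_self hne] at hlim
  refine hlim.congr' ?_
  filter_upwards [eventually_gt_atTop 0] with k hk
  exact (fgnRhoNat_div_eq hk).symm
end

section
/- For H ∈ (0,1) and λ ∈ (0, π], the series ∑_{j∈ℤ} 1/|λ + 2jπ|^{2H+1} converges, and λ^{2H+1} ∑_{j∈ℤ} 1/|λ + 2jπ|^{2H+1} → 1 as λ → 0⁺. -/
open Filter Real

/-!
Only the `j = 0` term of `∑ⱼ |x + 2jc|^(-p)` blows up as `x → 0⁺`. For `|x| ≤ c` and `j ≠ 0` the
reverse triangle inequality gives `|x + 2jc| ≥ 2|j|c - c ≥ |j|c`, so the other terms are dominated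
uniformly by the convergent series `K = ∑ⱼ (|j|c)^(-p)`, and `x^p` times the sum is squeezed
between `1` and `1 + x^p K`.
-/

section LatticeSum

variable {c p x : ℝ}

theorem abs_int_mul_le_abs_add_two_mul_int_mul (hx : |x| ≤ c) {j : ℤ} (hj : j ≠ 0) :
    |(j : ℝ)| * c ≤ |x + 2 * j * c| := by
  have hc : 0 ≤ c := (abs_nonneg x).trans hx
  have hj1 : (1 : ℝ) ≤ |(j : ℝ)| := by exact_mod_cast Int.one_le_abs hj
  have htri : |2 * j * c| ≤ |x + 2 * j * c| + |x| := by
    simpa using abs_add_le (x + 2 * j * c) (-x)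
  rw [abs_mul, abs_mul, abs_two, abs_of_nonneg hc] at htri
  nlinarith

theorem one_div_abs_add_two_mul_int_mul_rpow_le (hc : 0 < c) (hp : 0 ≤ p) (hx : |x| ≤ c)
    {j : ℤ} (hj : j ≠ 0) : 1 / |x + 2 * j * c| ^ p ≤ 1 / (|(j : ℝ)| * c) ^ p := by
  have hjc : 0 < |(j : ℝ)| * c := mul_pos (by simpa using hj) hc
  gcongr
  exact abs_int_mul_le_abs_add_two_mul_int_mul hx hj

theorem summable_one_div_abs_add_two_mul_int_mul_rpow (hc : 0 < c) (hp : 1 < p) (x : ℝ) :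
    Summable fun j : ℤ => 1 / |x + 2 * j * c| ^ p := by
  refine (((summable_one_div_int_add_rpow (x / (2 * c)) p).mpr hp).div_const
    ((2 * c) ^ p)).congr fun j => ?_
  have : x + 2 * j * c = 2 * c * (j + x / (2 * c)) := by field_simp; ring
  rw [this, abs_mul, abs_of_pos (by positivity : (0 : ℝ) < 2 * c),
    mul_rpow (by positivity) (abs_nonneg _)]
  ring

theorem summable_one_div_abs_int_mul_rpow (hc : 0 < c) (hp : 1 < p) :
    Summable fun j : ℤ => 1 / (|(j : ℝ)| * c) ^ p := by
  refine ((summable_abs_int_rpow hp).div_const (c ^ p)).congr fun j => ?_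
  rw [mul_rpow (abs_nonneg _) hc.le, rpow_neg (abs_nonneg _)]
  ring

theorem one_div_rpow_le_tsum_one_div_abs_add_two_mul_int_mul_rpow (hc : 0 < c) (hp : 1 < p)
    (hx : 0 < x) : 1 / x ^ p ≤ ∑' j : ℤ, 1 / |x + 2 * j * c| ^ p := by
  simpa [abs_of_pos hx] using
    (summable_one_div_abs_add_two_mul_int_mul_rpow hc hp x).le_tsum 0 fun j _ => by positivity

-- The `j = 0` term of the series on the right is `1 / 0 = 0`.
theorem tsum_one_div_abs_add_two_mul_int_mul_rpow_le (hc : 0 < c) (hp : 1 < p) (hx : |x| ≤ c) :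
    ∑' j : ℤ, 1 / |x + 2 * j * c| ^ p ≤
      1 / |x| ^ p + ∑' j : ℤ, 1 / (|(j : ℝ)| * c) ^ p := by
  have hle : ∀ j : ℤ, (if j = 0 then 0 else 1 / |x + 2 * j * c| ^ p) ≤ 1 / (|(j : ℝ)| * c) ^ p := by
    intro j
    split_ifs with hj
    · positivity
    · exact one_div_abs_add_two_mul_int_mul_rpow_le hc (by linarith) hx hj
  have hnonneg : ∀ j : ℤ, 0 ≤ if j = 0 then (0 : ℝ) else 1 / |x + 2 * j * c| ^ p := by
    intro j; split_ifs <;> positivity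
  have hg := summable_one_div_abs_int_mul_rpow hc hp
  rw [(summable_one_div_abs_add_two_mul_int_mul_rpow hc hp x).tsum_eq_add_tsum_ite 0]
  simpa using
    add_le_add_left (Summable.tsum_le_tsum hle (hg.of_nonneg_of_le hnonneg hle) hg) (1 / |x| ^ p)

theorem tendsto_rpow_mul_tsum_one_div_abs_add_two_mul_int_mul_rpow (hc : 0 < c) (hp : 1 < p) :
    Tendsto (fun x : ℝ => x ^ p * ∑' j : ℤ, 1 / |x + 2 * j * c| ^ p) (nhdsWithin 0 (Set.Ioi 0))
      (nhds 1) := by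
  set K := ∑' j : ℤ, 1 / (|(j : ℝ)| * c) ^ p
  have hpow : Tendsto (fun x : ℝ => x ^ p) (nhdsWithin 0 (Set.Ioi 0)) (nhds 0) := by
    simpa [zero_rpow (by linarith : p ≠ 0)] using
      ((continuousAt_rpow_const 0 p (Or.inr (by linarith))).tendsto.mono_left nhdsWithin_le_nhds)
  have hupper : Tendsto (fun x : ℝ => 1 + x ^ p * K) (nhdsWithin 0 (Set.Ioi 0)) (nhds 1) := by
    simpa using tendsto_const_nhds.add (hpow.mul_const K)
  refine tendsto_of_tendsto_of_tendsto_of_le_of_le' tendsto_const_nhds hupper ?_ ?_ <;>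
    filter_upwards [Ioc_mem_nhdsGT hc] with x ⟨hx0, hxc⟩
  · have := one_div_rpow_le_tsum_one_div_abs_add_two_mul_int_mul_rpow hc hp hx0
    calc (1 : ℝ) = x ^ p * (1 / x ^ p) := by field_simp
      _ ≤ _ := by gcongr
  · have := tsum_one_div_abs_add_two_mul_int_mul_rpow_le hc hp (abs_le.2 ⟨by linarith, hxc⟩)
    rw [abs_of_pos hx0] at this
    calc x ^ p * ∑' j : ℤ, 1 / |x + 2 * j * c| ^ p ≤ x ^ p * (1 / x ^ p + K) := by gcongr
      _ = 1 + x ^ p * K := by field_simp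

end LatticeSum

theorem fgn_spectral_sum_asymptotic (H : ℝ) (hH : H ∈ Set.Ioo (0 : ℝ) 1) :
    (∀ lam ∈ Set.Ioc (0 : ℝ) π,
        Summable (fun j : ℤ => 1 / |lam + 2 * (j : ℝ) * π| ^ (2 * H + 1))) ∧
      Tendsto (fun lam : ℝ =>
          lam ^ (2 * H + 1) * ∑' j : ℤ, 1 / |lam + 2 * (j : ℝ) * π| ^ (2 * H + 1))
        (nhdsWithin 0 (Set.Ioi 0)) (nhds 1) := by
  have hp : 1 < 2 * H + 1 := by linarith [hH.1]
  exact ⟨fun lam _ => summable_one_div_abs_add_two_mul_int_mul_rpow pi_pos hp lam,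
    tendsto_rpow_mul_tsum_one_div_abs_add_two_mul_int_mul_rpow pi_pos hp⟩
end
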